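/- arXiv:1507.08139 — 2 statements merged into one kernel-verified Lean document; each statement's English description precedes it below -/
import Mathlib

section
/- Consider a rooted tree whose vertices are 'clusters', each cluster containing a positive number of nodes, such that for any two adjacent clusters at least one contains more than k nodes, and the total number of nodes over all clusters is n. Then the number of internal (non-leaf) clusters is at most 2n/k. -/
/-! Every internal cluster is either heavy (more than `k` nodes) or the parent of a heavy
child, since the edge to any of its children has a heavy endpoint. So the internal clusters
number at most twice the heavy ones, and there are at most `n / k` heavy clusters. -/

open Finset

theorem card_le_two_mul_of_subset_union_image {α : Type*} [DecidableEq α] {f : α → α}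
    {s t : Finset α} (h : s ⊆ t ∪ t.image f) : #s ≤ 2 * #t :=
  calc #s ≤ #(t ∪ t.image f) := card_le_card h
    _ ≤ #t + #(t.image f) := card_union_le _ _
    _ ≤ #t + #t := Nat.add_le_add_left card_image_le _
    _ = 2 * #t := (two_mul _).symm

theorem card_filter_lt_mul_le_sum {ι : Type*} (s : Finset ι) (w : ι → ℕ) (k : ℕ) :
    #(s.filter (k < w ·)) * k ≤ ∑ i ∈ s, w i :=
  calc #(s.filter (k < w ·)) * k = #(s.filter (k < w ·)) • k := (smul_eq_mul _ _).symm
    _ ≤ ∑ i ∈ s.filter (k < w ·), w i :=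
      card_nsmul_le_sum _ _ _ fun _ hi => (mem_filter.1 hi).2.le
    _ ≤ ∑ i ∈ s, w i := sum_le_sum_of_subset (filter_subset _ _)

theorem filter_hasChild_subset_heavy_union_image_parent {C : Type*} [Fintype C] [DecidableEq C]
    (parent : C → C) (r : C) (w : C → ℕ) (k : ℕ)
    (hadj : ∀ c : C, c ≠ r → k < w c ∨ k < w (parent c)) :
    univ.filter (fun c : C => ∃ c', c' ≠ r ∧ parent c' = c) ⊆
      univ.filter (k < w ·) ∪ (univ.filter (k < w ·)).image parent := by
  rintro _ hc
  obtain ⟨c', hc'r, rfl⟩ := (mem_filter.1 hc).2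
  rcases hadj c' hc'r with hheavy | hparent_heavy
  · exact mem_union_right _ (mem_image_of_mem parent (by simpa using hheavy))
  · exact mem_union_left _ (by simpa using hparent_heavy)

theorem internal_clusters_bound_general
    {C : Type*} [Fintype C] [DecidableEq C]
    (parent : C → C) (r : C)
    (w : C → ℕ)
    (k n : ℕ)
    (hn : ∑ c : C, w c = n)
    (hadj : ∀ c : C, c ≠ r → k < w c ∨ k < w (parent c)) :
    (Finset.univ.filter (fun c : C => ∃ c', c' ≠ r ∧ parent c' = c)).card * k
      ≤ 2 * n := by
  have hinternal := card_le_two_mul_of_subset_union_image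
    (filter_hasChild_subset_heavy_union_image_parent parent r w k hadj)
  have hheavy := card_filter_lt_mul_le_sum univ w k
  rw [hn] at hheavy
  calc _ ≤ 2 * #(univ.filter (k < w ·)) * k := Nat.mul_le_mul_right k hinternal
    _ = 2 * (#(univ.filter (k < w ·)) * k) := Nat.mul_assoc _ _ _
    _ ≤ 2 * n := Nat.mul_le_mul_left 2 hheavy

/-- in a rooted cluster tree (given by a parent function with
root `r`) where every cluster holds a positive number of nodes, any two
adjacent clusters include one with more than `k` nodes, and the clusters
hold `n` nodes in total, the number of internal (non-leaf) clusters is at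
most `2n/k`. -/
theorem internal_clusters_bound
    {C : Type*} [Fintype C] [DecidableEq C]
    (parent : C → C) (r : C)
    (hroot : parent r = r)
    (hreach : ∀ c : C, ∃ m : ℕ, parent^[m] c = r)
    (w : C → ℕ) (hw : ∀ c, 0 < w c)
    (k n : ℕ) (hk : 0 < k)
    (hn : ∑ c : C, w c = n)
    (hadj : ∀ c : C, c ≠ r → k < w c ∨ k < w (parent c)) :
    (Finset.univ.filter (fun c : C => ∃ c', c' ≠ r ∧ parent c' = c)).card * k
      ≤ 2 * n :=
  internal_clusters_bound_general parent r w k n hn hadj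
end

section
/- Let f be an antisymmetric circulation and let C be a cycle of fractional edges with forward availability a = min over edges e in C of (⌈f(e)⌉ - f(e)) and backward availability b = min over edges e of (f(e) - ⌊f(e)⌋). Then a > 0, b > 0, and after adding a to the flow on every forward edge of C (pushing a units around C), at least one edge of C has integral flow, and every edge of C still satisfies ⌊f(e)⌋ ≤ f'(e) ≤ ⌈f(e)⌉. -/
/-- A circulation: flow conservation at every vertex. -/
def IsCirculation {V : Type*} [Fintype V] (f : V × V → ℝ) : Prop :=
  ∀ v : V, (∑ u : V, f (u, v)) = (∑ u : V, f (v, u))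

namespace Int

variable {R : Type*} [Ring R] [LinearOrder R] [IsOrderedRing R] [FloorRing R] {r : R}

lemma lt_ceil_of_fract_ne_zero (h : fract r ≠ 0) : r < ⌈r⌉ :=
  (le_ceil r).lt_of_ne fun hr => h (fract_eq_zero_iff.mpr ((ceil_eq_self_iff_mem r).mp hr.symm))

lemma floor_lt_of_fract_ne_zero (h : fract r ≠ 0) : (⌊r⌋ : R) < r :=
  floor_lt_self_iff.mpr (fract_ne_zero_iff.mp h)

end Int

namespace Finset

variable {ι R : Type*} [Ring R] [LinearOrder R] [IsOrderedRing R] [FloorRing R]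
  {s : Finset ι} (hs : s.Nonempty) {x : ι → R}

lemma inf'_ceil_sub_pos (hx : ∀ i ∈ s, Int.fract (x i) ≠ 0) :
    0 < s.inf' hs (fun i => (⌈x i⌉ : R) - x i) :=
  (lt_inf'_iff hs).mpr fun i hi => sub_pos.mpr (Int.lt_ceil_of_fract_ne_zero (hx i hi))

lemma inf'_sub_floor_pos (hx : ∀ i ∈ s, Int.fract (x i) ≠ 0) :
    0 < s.inf' hs (fun i => x i - (⌊x i⌋ : R)) :=
  (lt_inf'_iff hs).mpr fun i hi => sub_pos.mpr (Int.floor_lt_of_fract_ne_zero (hx i hi))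

lemma add_inf'_ceil_sub_le_ceil {i : ι} (hi : i ∈ s) :
    x i + s.inf' hs (fun j => (⌈x j⌉ : R) - x j) ≤ ⌈x i⌉ :=
  le_sub_iff_add_le'.mp (inf'_le (fun j => (⌈x j⌉ : R) - x j) hi)

lemma exists_fract_add_inf'_ceil_sub_eq_zero :
    ∃ i ∈ s, Int.fract (x i + s.inf' hs (fun j => (⌈x j⌉ : R) - x j)) = 0 := by
  obtain ⟨i, hi, hmin⟩ := exists_mem_eq_inf' hs (fun j => (⌈x j⌉ : R) - x j)
  exact ⟨i, hi, by rw [hmin, add_sub_cancel, Int.fract_intCast]⟩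

end Finset

theorem cancel_fractional_cycle_general
    {V : Type*} (f : V × V → ℝ)
    (m : ℕ) (v : Fin (m + 1) → V)
    (hfrac : ∀ i : Fin (m + 1), Int.fract (f (v i, v (i + 1))) ≠ 0)
    (a b : ℝ)
    (ha : a = Finset.univ.inf' Finset.univ_nonempty
      (fun i : Fin (m + 1) => (⌈f (v i, v (i + 1))⌉ : ℝ) - f (v i, v (i + 1))))
    (hb : b = Finset.univ.inf' Finset.univ_nonempty
      (fun i : Fin (m + 1) => f (v i, v (i + 1)) - (⌊f (v i, v (i + 1))⌋ : ℝ))) :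
    0 < a ∧ 0 < b ∧
      (∃ i : Fin (m + 1), Int.fract (f (v i, v (i + 1)) + a) = 0) ∧
      (∀ i : Fin (m + 1),
        (⌊f (v i, v (i + 1))⌋ : ℝ) ≤ f (v i, v (i + 1)) + a ∧
          f (v i, v (i + 1)) + a ≤ (⌈f (v i, v (i + 1))⌉ : ℝ)) := by
  set x : Fin (m + 1) → ℝ := fun i => f (v i, v (i + 1))
  have hx : ∀ i ∈ Finset.univ, Int.fract (x i) ≠ 0 := fun i _ => hfrac i
  have ha_pos : 0 < a := ha ▸ Finset.inf'_ceil_sub_pos _ hx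
  refine ⟨ha_pos, hb ▸ Finset.inf'_sub_floor_pos _ hx, ?_, fun i => ⟨?_, ?_⟩⟩
  · obtain ⟨i, -, hi⟩ := Finset.exists_fract_add_inf'_ceil_sub_eq_zero (x := x) Finset.univ_nonempty
    exact ⟨i, ha ▸ hi⟩
  · linarith [Int.floor_le (x i)]
  · exact ha ▸ Finset.add_inf'_ceil_sub_le_ceil (x := x) _ (Finset.mem_univ i)

/-- for a cycle of fractional edges, the forward availability
`a` and backward availability `b` are positive, and pushing `a` units
forward makes some edge integral while keeping every cycle edge between its
floor and ceiling. -/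
theorem cancel_fractional_cycle
    {V : Type*} [Fintype V] (f : V × V → ℝ)
    (hanti : ∀ u v : V, f (u, v) = - f (v, u))
    (hcirc : IsCirculation f)
    (m : ℕ) (v : Fin (m + 1) → V) (hv : Function.Injective v)
    (hfrac : ∀ i : Fin (m + 1), Int.fract (f (v i, v (i + 1))) ≠ 0)
    (a b : ℝ)
    (ha : a = Finset.univ.inf' Finset.univ_nonempty
      (fun i : Fin (m + 1) => (⌈f (v i, v (i + 1))⌉ : ℝ) - f (v i, v (i + 1))))
    (hb : b = Finset.univ.inf' Finset.univ_nonempty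
      (fun i : Fin (m + 1) => f (v i, v (i + 1)) - (⌊f (v i, v (i + 1))⌋ : ℝ))) :
    0 < a ∧ 0 < b ∧
      (∃ i : Fin (m + 1), Int.fract (f (v i, v (i + 1)) + a) = 0) ∧
      (∀ i : Fin (m + 1),
        (⌊f (v i, v (i + 1))⌋ : ℝ) ≤ f (v i, v (i + 1)) + a ∧
          f (v i, v (i + 1)) + a ≤ (⌈f (v i, v (i + 1))⌉ : ℝ)) :=
  cancel_fractional_cycle_general f m v hfrac a b ha hb
end
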